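/- Let ι be a finite nonempty type, H a countable type, and π a probability mass function on ι × H with marginal π_M(m) = Σ_h π(m,h) > 0 for every m and conditionals π(h|m) = π(m,h)/π_M(m). For each m ∈ ι let Q_{H|m} be a pmf on H with KL(Q_{H|m}‖π(·|m)) < ∞. Then the minimum over all pmfs Q_M on ι of KL(Q_M ⊗ Q_{H|·}‖π), where (Q_M ⊗ Q_{H|·})(m,h) = Q_M(m)·Q_{H|m}(h), equals −log(Σ_{m∈ι} π_M(m)·exp(−KL(Q_{H|m}‖π(·|m)))). -/

import Mathlib

/-! Since `π` factors as `πM ⊗ cond`, the chain rule for the Kullback–Leibler divergence gives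
`KL(QM ⊗ QH‖π) = ∑ m, QM m * (log (QM m / πM m) + KL m)` with `KL m = KL(QH m‖cond m)`.
Writing `w m = πM m * exp (- KL m)` and `W = ∑ m, w m`, this equals `KL(QM‖w / W) - log W`,
so by Gibbs' inequality it is at least `- log W`, with equality at `QM = w / W`. -/

open scoped ENNReal Classical

/-- Kullback–Leibler divergence between two probability mass functions on a countable
type: `KL(p‖q) = ∑ x, p x * log (p x / q x) ∈ [0,∞]`, with the conventions
`0 * log (0 / q x) = 0` (automatic since the factor `p x` vanishes) and
`KL(p‖q) = ∞` when `p` is not absolutely continuous with respect to `q`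
(or when the series fails to be summable, in which case the sum is genuinely `+∞`
since the negative parts of a relative-entropy series are always summable). -/
noncomputable def klDiv {X : Type*} (p q : PMF X) : ℝ≥0∞ :=
  if (∀ x, q x = 0 → p x = 0) ∧
      Summable (fun x => (p x).toReal * Real.log ((p x).toReal / (q x).toReal))
  then ENNReal.ofReal (∑' x, (p x).toReal * Real.log ((p x).toReal / (q x).toReal))
  else ⊤

/-- The joint pmf on `ι × H` obtained from a pmf `QM` on `ι` and a family of conditionals
`QH m` on `H`; its value at `(m, h)` is `QM m * QH m h`. -/
noncomputable def jointPMF {ι H : Type*} (QM : PMF ι) (QH : ι → PMF H) : PMF (ι × H) :=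
  QM.bind fun m => (QH m).map fun h => (m, h)

section MulLogDiv

open Real

lemma sub_le_mul_log_div {p q : ℝ} (hp : 0 ≤ p) (hq : 0 ≤ q) (hpq : q = 0 → p = 0) :
    p - q ≤ p * log (p / q) := by
  rcases hq.eq_or_lt with rfl | hq
  · simp [hpq rfl]
  · have hkl := mul_nonneg hq.le (InformationTheory.klFun_nonneg (div_nonneg hp hq.le))
    have hexpand : q * InformationTheory.klFun (p / q) = p * log (p / q) + q - p := by
      rw [InformationTheory.klFun_apply]; field_simp
    linarith

lemma tsum_mul_log_div_nonneg {X : Type*} {p q : X → ℝ} (hp : ∀ x, 0 ≤ p x)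
    (hq : ∀ x, 0 ≤ q x) (hpq : ∀ x, q x = 0 → p x = 0) (hps : Summable p) (hqs : Summable q)
    (hs : Summable fun x => p x * log (p x / q x)) (hsum : ∑' x, p x = ∑' x, q x) :
    0 ≤ ∑' x, p x * log (p x / q x) := by
  have h := (hps.sub hqs).tsum_le_tsum (fun x => sub_le_mul_log_div (hp x) (hq x) (hpq x)) hs
  rwa [hps.tsum_sub hqs, hsum, sub_self] at h

lemma mul_log_div_mul (a b c d : ℝ) (hc : c ≠ 0) (hbd : d = 0 → b = 0) :
    a * b * log (a * b / (c * d)) = a * (log (a / c) * b + b * log (b / d)) := by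
  rcases eq_or_ne a 0 with rfl | ha
  · simp
  rcases eq_or_ne b 0 with rfl | hb
  · simp
  have hd : d ≠ 0 := mt hbd hb
  rw [mul_div_mul_comm, log_mul (div_ne_zero ha hc) (div_ne_zero hb hd)]
  ring

lemma mul_log_div_add (x s : ℝ) {c : ℝ} (hc : c ≠ 0) :
    x * (log (x / c) + s) = x * log (x / (c * exp (-s))) := by
  rcases eq_or_ne x 0 with rfl | hx
  · simp
  rw [log_div hx hc, log_div hx (mul_ne_zero hc (exp_pos _).ne'), log_mul hc (exp_pos _).ne',
    log_exp]
  ring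

variable {ι : Type*} [Fintype ι]

lemma neg_log_sum_le_sum_mul_log_div {p w : ι → ℝ} (hp : ∀ i, 0 ≤ p i) (hp1 : ∑ i, p i = 1)
    (hw : ∀ i, 0 < w i) : -log (∑ i, w i) ≤ ∑ i, p i * log (p i / w i) := by
  set W := ∑ i, w i
  have hW : 0 < W :=
    Finset.sum_pos (fun i _ => hw i) (Finset.nonempty_of_sum_ne_zero (hp1 ▸ one_ne_zero))
  have hsplit : ∀ i, p i * log (p i / w i) = p i * log (p i / (w i / W)) - p i * log W := by
    intro i
    rcases eq_or_ne (p i) 0 with hpi | hpi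
    · simp [hpi]
    rw [div_div_eq_mul_div, mul_div_right_comm, log_mul (div_ne_zero hpi (hw i).ne') hW.ne']
    ring
  have hgibbs : ∑ i, (p i - w i / W) ≤ ∑ i, p i * log (p i / (w i / W)) :=
    Finset.sum_le_sum fun i _ =>
      sub_le_mul_log_div (hp i) (div_pos (hw i) hW).le fun h => absurd h (div_pos (hw i) hW).ne'
  rw [Finset.sum_sub_distrib, hp1, ← Finset.sum_div, div_self hW.ne', sub_self] at hgibbs
  rw [Finset.sum_congr rfl fun i _ => hsplit i, Finset.sum_sub_distrib, ← Finset.sum_mul, hp1]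
  linarith

lemma sum_div_sum_mul_log_div {w : ι → ℝ} (hw : ∀ i, w i ≠ 0) :
    ∑ i, w i / (∑ j, w j) * log (w i / (∑ j, w j) / w i) = -log (∑ i, w i) := by
  rcases eq_or_ne (∑ j, w j) 0 with hW | hW
  · simp [hW]
  simp_rw [div_div_cancel_left' (hw _), log_inv, ← Finset.sum_mul, ← Finset.sum_div,
    div_self hW, one_mul]

end MulLogDiv

lemma summable_prod_of_finite_left {ι H : Type*} [Finite ι] {f : ι × H → ℝ}
    (hf : ∀ m, Summable fun h => f (m, h)) : Summable f :=
  summable_abs_iff.mp <| (summable_prod_of_nonneg fun _ => abs_nonneg _).mpr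
    ⟨fun m => (hf m).abs, Summable.of_finite (f := fun m => ∑' h, |f (m, h)|)⟩

namespace PMF

variable {α : Type*}

lemma summable_toReal (p : PMF α) : Summable fun a => (p a).toReal :=
  ENNReal.summable_toReal p.tsum_coe_ne_top

lemma tsum_toReal (p : PMF α) : ∑' a, (p a).toReal = 1 := by
  rw [← ENNReal.tsum_toReal_eq p.apply_ne_top, p.tsum_coe, ENNReal.toReal_one]

lemma sum_toReal [Fintype α] (p : PMF α) : ∑ a, (p a).toReal = 1 := by
  rw [← p.tsum_toReal, tsum_fintype]

lemma toReal_eq_zero_iff (p : PMF α) (a : α) : (p a).toReal = 0 ↔ p a = 0 := by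
  simp [ENNReal.toReal_eq_zero_iff, p.apply_ne_top a]

end PMF

section Gibbs

open Real

variable {ι : Type*} [Fintype ι] [Nonempty ι]

theorem iInf_ofReal_sum_mul_log_div_add {c : ι → ℝ} (hc : ∀ i, 0 < c i) (s : ι → ℝ) :
    ⨅ q : PMF ι, ENNReal.ofReal (∑ i, (q i).toReal * (log ((q i).toReal / c i) + s i)) =
      ENNReal.ofReal (-log (∑ i, c i * exp (-s i))) := by
  set w := fun i => c i * exp (-s i)
  have hw : ∀ i, 0 < w i := fun i => mul_pos (hc i) (exp_pos _)
  have hW : 0 < ∑ i, w i := Finset.sum_pos (fun i _ => hw i) Finset.univ_nonempty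
  simp_rw [mul_log_div_add _ _ (hc _).ne']
  have hq₀ : ∑ i, ENNReal.ofReal (w i / ∑ j, w j) = 1 := by
    rw [← ENNReal.ofReal_sum_of_nonneg fun i _ => (div_pos (hw i) hW).le, ← Finset.sum_div,
      div_self hW.ne', ENNReal.ofReal_one]
  refine le_antisymm ((iInf_le _ (PMF.ofFintype _ hq₀)).trans_eq ?_) (le_iInf fun q => ?_)
  · simp_rw [PMF.ofFintype_apply, ENNReal.toReal_ofReal (div_pos (hw _) hW).le]
    rw [sum_div_sum_mul_log_div fun i => (hw i).ne']
  · exact ENNReal.ofReal_le_ofReal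
      (neg_log_sum_le_sum_mul_log_div (fun _ => ENNReal.toReal_nonneg) q.sum_toReal hw)

end Gibbs

section KL

open Real

variable {X : Type*} {p q : PMF X}

lemma klDiv_lt_top_iff : klDiv p q < ⊤ ↔ (∀ x, q x = 0 → p x = 0) ∧
    Summable fun x => (p x).toReal * log ((p x).toReal / (q x).toReal) := by
  unfold klDiv
  split_ifs with h
  · exact iff_of_true ENNReal.ofReal_lt_top h
  · exact iff_of_false (lt_irrefl ⊤) h

lemma klDiv_eq_ofReal_tsum (hpq : ∀ x, q x = 0 → p x = 0)
    (hs : Summable fun x => (p x).toReal * log ((p x).toReal / (q x).toReal)) :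
    klDiv p q = ENNReal.ofReal (∑' x, (p x).toReal * log ((p x).toReal / (q x).toReal)) := by
  rw [klDiv, if_pos ⟨hpq, hs⟩]

lemma toReal_klDiv_of_lt_top (h : klDiv p q < ⊤) :
    (klDiv p q).toReal = ∑' x, (p x).toReal * log ((p x).toReal / (q x).toReal) := by
  obtain ⟨hpq, hs⟩ := klDiv_lt_top_iff.mp h
  rw [klDiv_eq_ofReal_tsum hpq hs, ENNReal.toReal_ofReal]
  exact tsum_mul_log_div_nonneg (fun _ => ENNReal.toReal_nonneg) (fun _ => ENNReal.toReal_nonneg)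
    (fun x hx => (p.toReal_eq_zero_iff x).mpr (hpq x ((q.toReal_eq_zero_iff x).mp hx)))
    p.summable_toReal q.summable_toReal hs (by rw [p.tsum_toReal, q.tsum_toReal])

end KL

section Joint

open Real

variable {ι H : Type*}

lemma jointPMF_apply (QM : PMF ι) (QH : ι → PMF H) (m : ι) (h : H) :
    jointPMF QM QH (m, h) = QM m * QH m h := by
  rw [jointPMF, PMF.bind_apply, tsum_eq_single m fun m' hm' => ?_, PMF.map_apply,
    tsum_eq_single h fun h' hh' => ?_]
  · simp
  · simp [Ne.symm hh']
  · simp [PMF.map_apply, Ne.symm hm']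

theorem klDiv_jointPMF [Fintype ι] (QM PM : PMF ι) (QH PH : ι → PMF H) (hPM : ∀ m, PM m ≠ 0)
    (hfin : ∀ m, klDiv (QH m) (PH m) < ⊤) :
    klDiv (jointPMF QM QH) (jointPMF PM PH) = ENNReal.ofReal (∑ m, (QM m).toReal *
      (log ((QM m).toReal / (PM m).toReal) + (klDiv (QH m) (PH m)).toReal)) := by
  have hPH : ∀ m h, PH m h = 0 → QH m h = 0 := fun m => (klDiv_lt_top_iff.mp (hfin m)).1
  have hterm : ∀ m h, (jointPMF QM QH (m, h)).toReal *
      log ((jointPMF QM QH (m, h)).toReal / (jointPMF PM PH (m, h)).toReal) =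
      (QM m).toReal * (log ((QM m).toReal / (PM m).toReal) * (QH m h).toReal +
        (QH m h).toReal * log ((QH m h).toReal / (PH m h).toReal)) := by
    intro m h
    simp only [jointPMF_apply, ENNReal.toReal_mul]
    exact mul_log_div_mul _ _ _ _ ((PM.toReal_eq_zero_iff m).not.mpr (hPM m)) fun h0 =>
      ((QH m).toReal_eq_zero_iff h).mpr (hPH m h (((PH m).toReal_eq_zero_iff h).mp h0))
  have hac : ∀ x, jointPMF PM PH x = 0 → jointPMF QM QH x = 0 := by
    rintro ⟨m, h⟩ hx
    rw [jointPMF_apply] at hx ⊢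
    rw [hPH m h ((mul_eq_zero.mp hx).resolve_left (hPM m)), mul_zero]
  have hrow : ∀ m, Summable fun h => (jointPMF QM QH (m, h)).toReal *
      log ((jointPMF QM QH (m, h)).toReal / (jointPMF PM PH (m, h)).toReal) :=
    fun m => ((((QH m).summable_toReal.mul_left _).add (klDiv_lt_top_iff.mp (hfin m)).2).mul_left _
      ).congr fun h => (hterm m h).symm
  have hs : Summable fun x => (jointPMF QM QH x).toReal *
      log ((jointPMF QM QH x).toReal / (jointPMF PM PH x).toReal) :=
    summable_prod_of_finite_left hrow
  rw [klDiv_eq_ofReal_tsum hac hs, hs.tsum_prod' hrow, tsum_fintype]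
  congr 1
  refine Finset.sum_congr rfl fun m _ => ?_
  simp_rw [hterm]
  rw [tsum_mul_left, ((QH m).summable_toReal.mul_left _).tsum_add (klDiv_lt_top_iff.mp (hfin m)).2,
    tsum_mul_left, PMF.tsum_toReal, mul_one, toReal_klDiv_of_lt_top (hfin m)]

end Joint

theorem variational_weights_optimal_value_general {ι H : Type*} [Fintype ι]
    (π : PMF (ι × H))
    (πM : PMF ι)
    (hπM_pos : ∀ m, 0 < πM m)
    (cond : ι → PMF H) (hcond : ∀ m h, cond m h = π (m, h) / πM m)
    (QH : ι → PMF H) (hfin : ∀ m, klDiv (QH m) (cond m) < ⊤) :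
    (⨅ QM : PMF ι, klDiv (jointPMF QM QH) π) =
      ENNReal.ofReal
        (- Real.log (∑ m, (πM m).toReal * Real.exp (- (klDiv (QH m) (cond m)).toReal))) := by
  have : Nonempty ι := πM.support_nonempty.to_type
  have hπ : π = jointPMF πM cond := PMF.ext fun ⟨m, h⟩ => by
    rw [jointPMF_apply, hcond, ENNReal.mul_div_cancel (hπM_pos m).ne' (πM.apply_ne_top m)]
  simp_rw [hπ, klDiv_jointPMF _ _ _ _ (fun m => (hπM_pos m).ne') hfin]
  exact iInf_ofReal_sum_mul_log_div_add
    (fun m => ENNReal.toReal_pos (hπM_pos m).ne' (πM.apply_ne_top m)) _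

/-- **Optimal value in Proposition 1 of the paper, discrete version.** Let `π` be a pmf
on `ι × H` with positive marginal `πM` and conditionals `cond m`. For a family `QH m` of
pmfs on `H` with `KL(QH m‖cond m) < ∞`, the minimum over all pmfs `QM` on `ι` of
`KL(QM ⊗ QH‖π)`, where `(QM ⊗ QH) (m, h) = QM m * QH m h`, equals
`- log (∑ m, πM m * exp (- KL(QH m‖cond m)))`. -/
theorem variational_weights_optimal_value {ι H : Type*} [Fintype ι] [Nonempty ι]
    [Countable H]
    (π : PMF (ι × H))
    (πM : PMF ι) (hπM : ∀ m, πM m = ∑' h, π (m, h))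
    (hπM_pos : ∀ m, 0 < πM m)
    (cond : ι → PMF H) (hcond : ∀ m h, cond m h = π (m, h) / πM m)
    (QH : ι → PMF H) (hfin : ∀ m, klDiv (QH m) (cond m) < ⊤) :
    (⨅ QM : PMF ι, klDiv (jointPMF QM QH) π) =
      ENNReal.ofReal
        (- Real.log (∑ m, (πM m).toReal * Real.exp (- (klDiv (QH m) (cond m)).toReal))) :=
  variational_weights_optimal_value_general π πM hπM_pos cond hcond QH hfin
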